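/- Let P be a Poisson algebra containing elements η^{(2t)} for 0 ≤ t ≤ (λ_1−1)/2 (with η^{(0)} = 1 and η^{(2r)} := 0 for 2r > λ_1) and θ^{(s)} for s in an appropriate index range, satisfying {η^{(2r)}, η^{(2t)}} = 0 and {η^{(2r)}, θ^{(s)}} = Σ_{m=0}^{r−1} η^{(2m)} θ^{(2r+s−1−2m)} for all relevant r, s. Set z = Σ_{t=0}^{(λ_1−1)/2} η^{(2t)} θ^{(n−2t)}, where n = λ_1 + s_{1,2}. Then {η^{(2r)}, z} = 0 for all r ≥ 0. -/
import Mathlib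


open Finset

/-- Let `P` be a Poisson algebra (a commutative `ℂ`-algebra with a bilinear bracket which
is a biderivation), containing elements `η^{(2t)}` (with `η^{(0)} = 1` and `η^{(2r)} = 0`
for `2r > λ₁`) and `θ^{(s)}`, satisfying `{η^{(2r)}, η^{(2t)}} = 0` and
`{η^{(2r)}, θ^{(s)}} = ∑_{m=0}^{r-1} η^{(2m)} θ^{(2r+s-1-2m)}`.  Set
`z = ∑_{t=0}^{(λ₁-1)/2} η^{(2t)} θ^{(n-2t)}` where `n = λ₁ + s₁₂`.  Then
`{η^{(2r)}, z} = 0` for all `r ≥ 0`.  (Here `η t` denotes `η^{(2t)}`.) -/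
theorem stmt14 {P : Type*} [CommRing P] [Algebra ℂ P]
    (br : P →ₗ[ℂ] P →ₗ[ℂ] P)
    (hLeib : ∀ x y w : P, br x (y * w) = y * br x w + w * br x y)
    (lam1 : ℕ) (hpos : 0 < lam1) (hodd : Odd lam1)
    (s12 : ℤ) (n : ℤ) (hn : n = (lam1 : ℤ) + s12)
    (η : ℕ → P) (θ : ℤ → P)
    (hη0 : η 0 = 1)
    (hηvan : ∀ r : ℕ, (lam1 : ℤ) < 2 * r → η r = 0)
    (hηη : ∀ r t : ℕ, br (η r) (η t) = 0)
    (hηθ : ∀ (r : ℕ) (s : ℤ),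
      br (η r) (θ s) = ∑ m ∈ Finset.range r, η m * θ (2 * r + s - 1 - 2 * m))
    (z : P)
    (hz : z = ∑ t ∈ Finset.range ((lam1 - 1) / 2 + 1), η t * θ (n - 2 * t)) :
    ∀ r : ℕ, br (η r) z = 0 := by

  obtain ⟨k, hk⟩ := hodd
  have hNk : (lam1 - 1) / 2 + 1 = k + 1 := by omega
  have hηN : η (k + 1) = 0 := hηvan _ (by push_cast; omega)
  have key : ∀ s : ℤ, ∑ t ∈ Finset.range (k + 1), η t * θ (s - 2 * t) = 0 := by
    intro s
    have h := hηθ (k + 1) (s - 2 * (k + 1) + 1)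
    rw [hηN] at h
    simp only [map_zero, LinearMap.zero_apply] at h
    have e : ∑ t ∈ Finset.range (k + 1), η t * θ (s - 2 * t)
        = ∑ m ∈ Finset.range (k + 1),
            η m * θ (2 * ((k : ℕ) + 1 : ℕ) + (s - 2 * (k + 1) + 1) - 1 - 2 * m) := by
      apply Finset.sum_congr rfl
      intro m _
      congr 2
      push_cast
      ring
    rw [e, ← h]
  intro r
  rw [hz, hNk, map_sum]
  calc ∑ t ∈ Finset.range (k + 1), br (η r) (η t * θ (n - 2 * t))
      = ∑ t ∈ Finset.range (k + 1), ∑ m ∈ Finset.range r,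
          η m * (η t * θ ((n - 1 + 2 * r - 2 * m) - 2 * t)) := by
        apply Finset.sum_congr rfl
        intro t _
        rw [hLeib, hηη, mul_zero, add_zero, hηθ, Finset.mul_sum]
        apply Finset.sum_congr rfl
        intro m _
        rw [show (2 * (r : ℤ) + (n - 2 * t) - 1 - 2 * m)
            = ((n - 1 + 2 * r - 2 * m) - 2 * t) from by ring]
        ring
    _ = ∑ m ∈ Finset.range r, η m *
          ∑ t ∈ Finset.range (k + 1), η t * θ ((n - 1 + 2 * r - 2 * m) - 2 * t) := by
        rw [Finset.sum_comm]
        simp [Finset.mul_sum]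
    _ = 0 := by simp [key]
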